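/- arXiv:2212.14775 — 3 statements merged into one kernel-verified Lean document; each statement's English description precedes it below -/
import Mathlib

section
/- Let T ∈ ℝ^{ℓ×m×n} with slices T_1,…,T_ℓ, and let α be a real number with α ≥ min_{‖y‖=‖z‖=1} Σ_{i=1}^ℓ (yᵀ T_i z)². Then the system of quadratic equations in (t, y, z, u) ∈ ℝ × ℝ^m × ℝ^n × ℝ^ℓ given by: yᵀ T_i z = t u_i for i=1,…,ℓ; ‖y‖² + ‖z‖² = 2t²; ‖u‖² = α t²; and t² + ‖y‖² + ‖z‖² + ‖u‖² = 3 + α, has a solution if and only if α ≤ ‖T‖_σ². -/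
open Finset

noncomputable section

abbrev E (n : ℕ) := EuclideanSpace ℝ (Fin n)

/-- The bilinear form `yᵀ A z`. -/
def bil {m n : ℕ} (A : Matrix (Fin m) (Fin n) ℝ) (y : E m) (z : E n) : ℝ :=
  ∑ j, ∑ k, y j * A j k * z k

/-- Values of the trilinear form `⟨T, x⊗y⊗z⟩` over unit vectors; its greatest
element is the tensor spectral norm. -/
def specSet {l m n : ℕ} (T : Fin l → Matrix (Fin m) (Fin n) ℝ) : Set ℝ :=
  {v | ∃ x : E l, ∃ y : E m, ∃ z : E n, ‖x‖ = 1 ∧ ‖y‖ = 1 ∧ ‖z‖ = 1 ∧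
    v = ∑ i, x i * bil (T i) y z}

/-!
Write `v(y, z) = (yᵀ T_i z)_i`. By Cauchy–Schwarz in `x`, `‖T‖_σ` is the maximum of `‖v(y, z)‖`
over unit `y, z`; since `v` is bilinear and `‖y‖ ‖z‖ ≤ 1` when `‖y‖² + ‖z‖² = 2`, it is also the
maximum of `‖v‖` on that set. The last three equations force `t² = 1`, so a solution is a point
with `‖y‖² + ‖z‖² = 2` and `‖v(y, z)‖² = α`. That set is connected (it is a sphere of dimension
`m + n - 1 ≥ 1`), and `‖v‖²` takes there a value `μ ≤ α` and the value `‖T‖_σ²`; the intermediate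
value theorem does the rest.
-/

open RealInnerProductSpace

theorem isConnected_setOf_sq_norm_add_sq_norm_eq {F G : Type*}
    [NormedAddCommGroup F] [NormedSpace ℝ F] [Nontrivial F]
    [NormedAddCommGroup G] [NormedSpace ℝ G] [Nontrivial G] {r : ℝ} (hr : 0 ≤ r) :
    IsConnected {p : F × G | ‖p.1‖ ^ 2 + ‖p.2‖ ^ 2 = r ^ 2} := by
  have hrank : 1 < Module.rank ℝ (WithLp 2 (F × G)) := by
    rw [(WithLp.linearEquiv 2 ℝ (F × G)).rank_eq, rank_prod]
    calc (1 : Cardinal) < 1 + 1 := by norm_num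
      _ ≤ _ := add_le_add (by simpa [Cardinal.one_le_iff_pos] using rank_pos (R := ℝ) (M := F))
        (by simpa [Cardinal.one_le_iff_pos] using rank_pos (R := ℝ) (M := G))
  convert (isConnected_sphere hrank 0 hr).image _ (WithLp.prod_continuous_ofLp 2 F G).continuousOn
  ext p
  simp only [Set.mem_ofPred_eq, Set.mem_image, mem_sphere_zero_iff_norm,
    ← sq_eq_sq₀ (norm_nonneg _) hr, WithLp.prod_norm_sq_eq_of_L2]
  exact ⟨fun hp => ⟨WithLp.toLp 2 p, hp, rfl⟩, by rintro ⟨q, hq, rfl⟩; exact hq⟩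

section SliceVector

variable {l m n : ℕ} (T : Fin l → Matrix (Fin m) (Fin n) ℝ)

def sliceVec (y : E m) (z : E n) : E l :=
  WithLp.toLp 2 fun i => bil (T i) y z

lemma inner_sliceVec (x : E l) (y : E m) (z : E n) :
    ⟪x, sliceVec T y z⟫ = ∑ i, x i * bil (T i) y z := by
  simp [sliceVec, PiLp.inner_apply, mul_comm]

lemma sq_norm_sliceVec (y : E m) (z : E n) :
    ‖sliceVec T y z‖ ^ 2 = ∑ i, bil (T i) y z ^ 2 := by
  simp [EuclideanSpace.norm_sq_eq, sliceVec]

lemma sliceVec_smul_smul (a b : ℝ) (y : E m) (z : E n) :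
    sliceVec T (a • y) (b • z) = (a * b) • sliceVec T y z := by
  ext i
  simp only [sliceVec, bil, PiLp.smul_apply, smul_eq_mul, Finset.mul_sum]
  exact Finset.sum_congr rfl fun j _ => Finset.sum_congr rfl fun k _ => by ring

lemma continuous_sliceVec : Continuous fun p : E m × E n => sliceVec T p.1 p.2 := by
  unfold sliceVec bil; fun_prop

lemma mem_specSet_iff {v : ℝ} :
    v ∈ specSet T ↔ ∃ (x : E l) (y : E m) (z : E n), ‖x‖ = 1 ∧ ‖y‖ = 1 ∧ ‖z‖ = 1 ∧
      v = ⟪x, sliceVec T y z⟫ := by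
  simp only [specSet, inner_sliceVec, Set.mem_ofPred_eq]

variable {T} {σ : ℝ}

lemma nonneg_of_isGreatest_specSet (hσ : IsGreatest (specSet T) σ) : 0 ≤ σ := by
  obtain ⟨x, y, z, hx, hy, hz, rfl⟩ := (mem_specSet_iff T).1 hσ.1
  have : -⟪x, sliceVec T y z⟫ ∈ specSet T :=
    (mem_specSet_iff T).2 ⟨-x, y, z, by rwa [norm_neg], hy, hz, (inner_neg_left _ _).symm⟩
  linarith [hσ.2 this]

lemma norm_sliceVec_le_of_norm_eq_one (hσ : IsGreatest (specSet T) σ) {y : E m} {z : E n}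
    (hy : ‖y‖ = 1) (hz : ‖z‖ = 1) : ‖sliceVec T y z‖ ≤ σ := by
  set v := sliceVec T y z
  rcases eq_or_ne v 0 with hv | hv
  · rw [hv, norm_zero]; exact nonneg_of_isGreatest_specSet hσ
  refine hσ.2 ((mem_specSet_iff T).2 ⟨‖v‖⁻¹ • v, y, z, norm_smul_inv_norm hv, hy, hz, ?_⟩)
  rw [real_inner_smul_left, real_inner_self_eq_norm_sq]
  field_simp [norm_ne_zero_iff.2 hv]

lemma norm_sliceVec_le (hσ : IsGreatest (specSet T) σ) (y : E m) (z : E n) :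
    ‖sliceVec T y z‖ ≤ σ * ‖y‖ * ‖z‖ := by
  rcases eq_or_ne y 0 with rfl | hy
  · simpa using sliceVec_smul_smul T 0 1 0 z
  rcases eq_or_ne z 0 with rfl | hz
  · simpa using sliceVec_smul_smul T 1 0 y 0
  have hunit := norm_sliceVec_le_of_norm_eq_one hσ
    (norm_smul_inv_norm (𝕜 := ℝ) hy) (norm_smul_inv_norm (𝕜 := ℝ) hz)
  rw [sliceVec_smul_smul, norm_smul, Real.norm_eq_abs, abs_of_pos (by positivity), ← mul_inv,
    inv_mul_le_iff₀ (by positivity)] at hunit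
  simp only [RCLike.ofReal_real_eq_id, id] at hunit
  linarith

lemma sq_norm_sliceVec_le (hσ : IsGreatest (specSet T) σ) {y : E m} {z : E n}
    (hyz : ‖y‖ ^ 2 + ‖z‖ ^ 2 = 2) : ‖sliceVec T y z‖ ^ 2 ≤ σ ^ 2 := by
  have hσ0 := nonneg_of_isGreatest_specSet hσ
  have hyz1 : ‖y‖ * ‖z‖ ≤ 1 := by nlinarith [sq_nonneg (‖y‖ - ‖z‖)]
  gcongr
  calc ‖sliceVec T y z‖ ≤ σ * (‖y‖ * ‖z‖) := by rw [← mul_assoc]; exact norm_sliceVec_le hσ y z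
    _ ≤ σ := mul_le_of_le_one_right hσ0 hyz1

lemma exists_le_norm_sliceVec (hσ : IsGreatest (specSet T) σ) :
    ∃ (y : E m) (z : E n), ‖y‖ = 1 ∧ ‖z‖ = 1 ∧ σ ≤ ‖sliceVec T y z‖ := by
  obtain ⟨x, y, z, hx, hy, hz, rfl⟩ := (mem_specSet_iff T).1 hσ.1
  refine ⟨y, z, hy, hz, ?_⟩
  simpa [hx] using real_inner_le_norm x (sliceVec T y z)

end SliceVector

lemma exists_sq_norm_sliceVec_eq {l m n : ℕ} (T : Fin l → Matrix (Fin m) (Fin n) ℝ)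
    {y₀ y₁ : E m} {z₀ z₁ : E n} (hy₀ : ‖y₀‖ = 1) (hz₀ : ‖z₀‖ = 1) (hy₁ : ‖y₁‖ = 1)
    (hz₁ : ‖z₁‖ = 1) {α : ℝ} (h₀ : ‖sliceVec T y₀ z₀‖ ^ 2 ≤ α) (h₁ : α ≤ ‖sliceVec T y₁ z₁‖ ^ 2) :
    ∃ (y : E m) (z : E n), ‖y‖ ^ 2 + ‖z‖ ^ 2 = 2 ∧ ‖sliceVec T y z‖ ^ 2 = α := by
  have : Nontrivial (E m) := nontrivial_of_ne y₀ 0 (by rintro rfl; simp at hy₀)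
  have : Nontrivial (E n) := nontrivial_of_ne z₀ 0 (by rintro rfl; simp at hz₀)
  obtain ⟨⟨y, z⟩, hyz, hα⟩ :=
    (isConnected_setOf_sq_norm_add_sq_norm_eq (Real.sqrt_nonneg 2)).isPreconnected.intermediate_value
      (f := fun p : E m × E n => ‖sliceVec T p.1 p.2‖ ^ 2) (a := (y₀, z₀)) (b := (y₁, z₁))
      (by norm_num [hy₀, hz₀]) (by norm_num [hy₁, hz₁])
      ((continuous_sliceVec T).norm.pow 2).continuousOn ⟨h₀, h₁⟩
  rw [Set.mem_ofPred_eq, Real.sq_sqrt zero_le_two] at hyz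
  exact ⟨y, z, hyz, hα⟩

/-- the quadratic system is feasible iff α ≤ ‖T‖_σ². -/
theorem stmt1 {l m n : ℕ} (T : Fin l → Matrix (Fin m) (Fin n) ℝ) (σ μ α : ℝ)
    (hσ : IsGreatest (specSet T) σ)
    (hμ : IsLeast {v : ℝ | ∃ y : E m, ∃ z : E n, ‖y‖ = 1 ∧ ‖z‖ = 1 ∧
      v = ∑ i, (bil (T i) y z) ^ 2} μ)
    (hαμ : μ ≤ α) :
    (∃ (t : ℝ) (y : E m) (z : E n) (u : E l),
      (∀ i, bil (T i) y z = t * u i) ∧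
      ‖y‖ ^ 2 + ‖z‖ ^ 2 = 2 * t ^ 2 ∧
      ‖u‖ ^ 2 = α * t ^ 2 ∧
      t ^ 2 + ‖y‖ ^ 2 + ‖z‖ ^ 2 + ‖u‖ ^ 2 = 3 + α) ↔ α ≤ σ ^ 2 := by
  obtain ⟨y₀, z₀, hy₀, hz₀, rfl⟩ := hμ.1
  simp only [← sq_norm_sliceVec] at hαμ ⊢
  constructor
  · rintro ⟨t, y, z, u, hu, hyz, hu2, hsum⟩
    have h3α : 3 + α ≠ 0 := by nlinarith [sq_nonneg ‖sliceVec T y₀ z₀‖]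
    have ht : t ^ 2 = 1 := mul_right_cancel₀ h3α (by linear_combination hsum - hyz - hu2)
    have hv : sliceVec T y z = t • u := by ext i; exact hu i
    calc α = ‖sliceVec T y z‖ ^ 2 := by
          rw [hv, norm_smul, mul_pow, Real.norm_eq_abs, sq_abs, hu2, ht]; ring
      _ ≤ σ ^ 2 := sq_norm_sliceVec_le hσ (by rw [hyz, ht]; ring)
  · intro hασ
    obtain ⟨y₁, z₁, hy₁, hz₁, hσ₁⟩ := exists_le_norm_sliceVec hσ
    have hα₁ : α ≤ ‖sliceVec T y₁ z₁‖ ^ 2 :=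
      hασ.trans (pow_le_pow_left₀ (nonneg_of_isGreatest_specSet hσ) hσ₁ 2)
    obtain ⟨y, z, hyz, hα⟩ := exists_sq_norm_sliceVec_eq T hy₀ hz₀ hy₁ hz₁ hαμ hα₁
    refine ⟨1, y, z, sliceVec T y z, fun i => (one_mul _).symm, ?_, ?_, ?_⟩
    · rw [hyz]; ring
    · rw [hα]; ring
    · linear_combination hyz + hα
end
end

section
/- Let S ⊆ S^{ℓ−1} be a finite set of unit vectors in ℝ^ℓ such that for every unit vector x ∈ ℝ^ℓ there exists u ∈ S with uᵀx ≥ θ, where θ ∈ (0,1]. Then for any tensor T ∈ ℝ^{ℓ×m×n}, max_{x∈S} ‖T(x,•,•)‖_σ ≥ θ ‖T‖_σ, where T(x,•,•) = Σ_{i=1}^ℓ x_i T_i ∈ ℝ^{m×n} and ‖·‖_σ on a matrix denotes its largest singular value. -/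
open Finset

noncomputable section

/-! The maximiser `x` of the trilinear form at its optimal `y, z` is the unit vector along the
coefficient vector `c = (yᵀ Tᵢ z)ᵢ`, so `c = ‖T‖_σ x`. A `u ∈ S` with `uᵀx ≥ θ` then gives
`‖T(u,•,•)‖_σ ≥ yᵀ T(u,•,•) z = uᵀc = ‖T‖_σ uᵀx ≥ θ ‖T‖_σ`. -/

open RealInnerProductSpace

lemma bil_sum_smul {ι : Type*} [Fintype ι] {m n : ℕ} (a : ι → ℝ)
    (T : ι → Matrix (Fin m) (Fin n) ℝ) (y : E m) (z : E n) :
    bil (∑ i, a i • T i) y z = ∑ i, a i * bil (T i) y z := by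
  simp only [bil, Matrix.sum_apply, Matrix.smul_apply, smul_eq_mul, Finset.mul_sum,
    Finset.sum_mul]
  conv_rhs => rw [Finset.sum_comm]
  refine Finset.sum_congr rfl fun j _ => ?_
  conv_rhs => rw [Finset.sum_comm]
  exact Finset.sum_congr rfl fun k _ => Finset.sum_congr rfl fun i _ => by ring

lemma EuclideanSpace.real_inner_eq_sum_mul {ι : Type*} [Fintype ι]
    (x y : EuclideanSpace ℝ ι) : ⟪x, y⟫ = ∑ i, x i * y i := by
  simp [PiLp.inner_apply, mul_comm]

section

variable {F : Type*} [NormedAddCommGroup F] [InnerProductSpace ℝ F]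

lemma norm_le_inner_of_forall_inner_le {x c : F}
    (h : ∀ v : F, ‖v‖ = 1 → ⟪v, c⟫ ≤ ⟪x, c⟫) : ‖c‖ ≤ ⟪x, c⟫ := by
  rcases eq_or_ne c 0 with rfl | hc
  · simp
  calc ‖c‖ = ⟪‖c‖⁻¹ • c, c⟫ := by
        rw [real_inner_smul_left, real_inner_self_eq_norm_sq]
        field_simp
    _ ≤ ⟪x, c⟫ := h _ (by simp [norm_smul, hc])

lemma eq_inner_smul_of_forall_inner_le {x c : F} (hx : ‖x‖ = 1)
    (h : ∀ v : F, ‖v‖ = 1 → ⟪v, c⟫ ≤ ⟪x, c⟫) : c = ⟪x, c⟫ • x := by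
  have hnorm : ⟪x, c⟫ = ‖c‖ :=
    le_antisymm (by simpa [hx] using real_inner_le_norm x c)
      (norm_le_inner_of_forall_inner_le h)
  have hCS : ‖c‖ • x = ‖x‖ • c := inner_eq_norm_mul_iff_real.mp (by rw [hx, one_mul, hnorm])
  rw [hx, one_smul] at hCS
  rw [hnorm, hCS]

end

theorem stmt8_general {l m n : ℕ} (S : Set (E l))
    (θ : ℝ)
    (hcov : ∀ x : E l, ‖x‖ = 1 → ∃ u ∈ S, θ ≤ ∑ i, u i * x i)
    (T : Fin l → Matrix (Fin m) (Fin n) ℝ) (σ : ℝ) (g : E l → ℝ)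
    (hσ : IsGreatest (specSet T) σ)
    (hg : ∀ x ∈ S, IsGreatest {v : ℝ | ∃ y : E m, ∃ z : E n,
      ‖y‖ = 1 ∧ ‖z‖ = 1 ∧ v = bil (∑ i, x i • T i) y z} (g x)) :
    ∃ x ∈ S, θ * σ ≤ g x := by
  obtain ⟨⟨x, y, z, hx, hy, hz, hσx⟩, hmax⟩ := hσ
  set c : E l := WithLp.toLp 2 fun i => bil (T i) y z
  simp only [← EuclideanSpace.real_inner_eq_sum_mul] at hcov
  have hσc : σ = ⟪x, c⟫ := by rw [EuclideanSpace.real_inner_eq_sum_mul]; exact hσx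
  have hmax' : ∀ v : E l, ‖v‖ = 1 → ⟪v, c⟫ ≤ ⟪x, c⟫ := fun v hv => hσc ▸
    hmax ⟨v, y, z, hv, hy, hz, EuclideanSpace.real_inner_eq_sum_mul v c⟩
  have hσ_nonneg : 0 ≤ σ := hσc ▸ (norm_nonneg c).trans (norm_le_inner_of_forall_inner_le hmax')
  have hc : c = σ • x := hσc ▸ eq_inner_smul_of_forall_inner_le hx hmax'
  obtain ⟨u, hu, hux⟩ := hcov x hx
  refine ⟨u, hu, ?_⟩
  calc θ * σ ≤ ⟪u, x⟫ * σ := mul_le_mul_of_nonneg_right hux hσ_nonneg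
    _ = ⟪u, c⟫ := by rw [hc, real_inner_smul_right, mul_comm]
    _ = bil (∑ i, u i • T i) y z := by
        rw [bil_sum_smul, EuclideanSpace.real_inner_eq_sum_mul]
    _ ≤ g u := (hg u hu).2 ⟨y, z, hy, hz, rfl⟩

/-- if every unit x is θ-covered by S, then
max_{x∈S} ‖T(x,•,•)‖_σ ≥ θ‖T‖_σ. -/
theorem stmt8 {l m n : ℕ} (S : Set (E l)) (hSfin : S.Finite)
    (hSunit : ∀ u ∈ S, ‖u‖ = 1)
    (θ : ℝ) (hθ0 : 0 < θ) (hθ1 : θ ≤ 1)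
    (hcov : ∀ x : E l, ‖x‖ = 1 → ∃ u ∈ S, θ ≤ ∑ i, u i * x i)
    (T : Fin l → Matrix (Fin m) (Fin n) ℝ) (σ : ℝ) (g : E l → ℝ)
    (hσ : IsGreatest (specSet T) σ)
    (hg : ∀ x ∈ S, IsGreatest {v : ℝ | ∃ y : E m, ∃ z : E n,
      ‖y‖ = 1 ∧ ‖z‖ = 1 ∧ v = bil (∑ i, x i • T i) y z} (g x)) :
    ∃ x ∈ S, θ * σ ≤ g x :=
  stmt8_general S θ hcov T σ g hσ hg
end
end

section
/- Let T = Σ_{i=1}^r λ_i x_i⊗y_i⊗z_i ∈ ℝ^{ℓ×m×n} with λ_i > 0, unit vectors x_i, y_i, z_i, and suppose (x_iᵀx_j)(y_iᵀy_j) = 0 and z_iᵀz_j = 0 for all i ≠ j. Then ‖T‖_σ = max_i λ_i and ‖T‖_* = Σ_i λ_i. -/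
open Finset

noncomputable section

/-- Frobenius inner product of two ℓ×m×n tensors given by slices. -/
def tinner {l m n : ℕ} (T Z : Fin l → Matrix (Fin m) (Fin n) ℝ) : ℝ :=
  ∑ i, ∑ j, ∑ k, T i j k * Z i j k

/-- Values Σ|λᵢ| over all rank-one decompositions of T; its least element is
the tensor nuclear norm ‖T‖_*. -/
def nucSet {l m n : ℕ} (T : Fin l → Matrix (Fin m) (Fin n) ℝ) : Set ℝ :=
  {v | ∃ (r : ℕ) (c : Fin r → ℝ) (xs : Fin r → E l) (ys : Fin r → E m)
      (zs : Fin r → E n),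
    (∀ a, ‖xs a‖ = 1 ∧ ‖ys a‖ = 1 ∧ ‖zs a‖ = 1) ∧
    (∀ i j k, T i j k = ∑ a, c a * xs a i * ys a j * zs a k) ∧
    v = ∑ a, |c a|}

/-!
The vectors `vec(xₐ ⊗ yₐ)` and `zₐ` form two orthonormal families, so by Bessel's inequality
and Cauchy–Schwarz, `∑ₐ |⟪x, xₐ⟫ ⟪y, yₐ⟫ ⟪z, zₐ⟫| ≤ 1` for unit vectors `x, y, z`. Since
`T(x, y, z) = ∑ₐ λₐ ⟪x, xₐ⟫ ⟪y, yₐ⟫ ⟪z, zₐ⟫`, this bounds `T(x, y, z)` by `maxₐ λₐ`, which is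
attained at `(xₐ, yₐ, zₐ)`. Dually, for any decomposition `T = ∑_b c_b X_b ⊗ Y_b ⊗ Z_b`,
`∑ₐ λₐ = ∑ₐ T(xₐ, yₐ, zₐ) = ∑_b c_b W(X_b, Y_b, Z_b)` with `W = ∑ₐ xₐ ⊗ yₐ ⊗ zₐ`, and the same
bound gives `|W(X_b, Y_b, Z_b)| ≤ 1`, hence `∑ₐ λₐ ≤ ∑_b |c_b|`.
-/

open scoped RealInnerProductSpace

lemma EuclideanSpace.sum_mul_eq_inner {ι : Type*} [Fintype ι] (x y : EuclideanSpace ℝ ι) :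
    ∑ i, x i * y i = ⟪x, y⟫ := by
  simp [PiLp.inner_apply, mul_comm]

def vecTensor {ι κ : Type*} (x : EuclideanSpace ℝ ι) (y : EuclideanSpace ℝ κ) :
    EuclideanSpace ℝ (ι × κ) :=
  WithLp.toLp 2 fun p => x p.1 * y p.2

section VecTensor

variable {ι κ : Type*} [Fintype ι] [Fintype κ]

lemma inner_vecTensor (x x' : EuclideanSpace ℝ ι) (y y' : EuclideanSpace ℝ κ) :
    ⟪vecTensor x y, vecTensor x' y'⟫ = ⟪x, x'⟫ * ⟪y, y'⟫ := by
  simp only [← EuclideanSpace.sum_mul_eq_inner, vecTensor, Fintype.sum_prod_type,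
    Finset.sum_mul_sum]
  exact Finset.sum_congr rfl fun _ _ => Finset.sum_congr rfl fun _ _ => by ring

lemma norm_vecTensor (x : EuclideanSpace ℝ ι) (y : EuclideanSpace ℝ κ) :
    ‖vecTensor x y‖ = ‖x‖ * ‖y‖ := by
  rw [norm_eq_sqrt_real_inner, inner_vecTensor, real_inner_self_eq_norm_sq,
    real_inner_self_eq_norm_sq, ← mul_pow, Real.sqrt_sq (by positivity)]

end VecTensor

section Bessel

variable {ι V W : Type*} [Fintype ι] [NormedAddCommGroup V] [InnerProductSpace ℝ V]
  [NormedAddCommGroup W] [InnerProductSpace ℝ W]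

lemma Orthonormal.sqrt_sum_sq_inner_le {u : ι → V} (hu : Orthonormal ℝ u) (x : V) :
    √(∑ a, |⟪x, u a⟫| ^ 2) ≤ ‖x‖ := by
  refine Real.sqrt_le_iff.mpr ⟨norm_nonneg x, ?_⟩
  simpa [real_inner_comm] using hu.sum_inner_products_le x (s := Finset.univ)

lemma sum_abs_inner_mul_abs_inner_le {u : ι → V} {v : ι → W} (hu : Orthonormal ℝ u)
    (hv : Orthonormal ℝ v) (x : V) (z : W) :
    ∑ a, |⟪x, u a⟫| * |⟪z, v a⟫| ≤ ‖x‖ * ‖z‖ :=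
  calc ∑ a, |⟪x, u a⟫| * |⟪z, v a⟫|
      ≤ √(∑ a, |⟪x, u a⟫| ^ 2) * √(∑ a, |⟪z, v a⟫| ^ 2) := Real.sum_mul_le_sqrt_mul_sqrt _ _ _
    _ ≤ ‖x‖ * ‖z‖ := mul_le_mul (hu.sqrt_sum_sq_inner_le x) (hv.sqrt_sum_sq_inner_le z)
        (Real.sqrt_nonneg _) (norm_nonneg x)

end Bessel

def trilinear {l m n : ℕ} (T : Fin l → Matrix (Fin m) (Fin n) ℝ) (x : E l) (y : E m) (z : E n) :
    ℝ :=
  ∑ i, x i * bil (T i) y z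

lemma orthonormal_vecTensor {ι κ α : Type*} [Fintype ι] [Fintype κ]
    {xs : α → EuclideanSpace ℝ ι} {ys : α → EuclideanSpace ℝ κ}
    (hx : ∀ a, ‖xs a‖ = 1) (hy : ∀ a, ‖ys a‖ = 1)
    (hxy : Pairwise fun a b => ⟪xs a, xs b⟫ * ⟪ys a, ys b⟫ = 0) :
    Orthonormal ℝ fun a => vecTensor (xs a) (ys a) :=
  ⟨fun a => by rw [norm_vecTensor, hx, hy, one_mul], fun _ _ hab =>
    (inner_vecTensor _ _ _ _).trans (hxy hab)⟩

section Decomposition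

variable {l m n : ℕ} {T : Fin l → Matrix (Fin m) (Fin n) ℝ}

lemma trilinear_eq_sum {ι : Type*} [Fintype ι] {c : ι → ℝ} {X : ι → E l} {Y : ι → E m}
    {Z : ι → E n} (hT : ∀ i j k, T i j k = ∑ a, c a * X a i * Y a j * Z a k)
    (x : E l) (y : E m) (z : E n) :
    trilinear T x y z = ∑ a, c a * (⟪x, X a⟫ * ⟪y, Y a⟫ * ⟪z, Z a⟫) := by
  simp only [mul_assoc, ← EuclideanSpace.sum_mul_eq_inner, Finset.sum_mul_sum]
  simp only [trilinear, bil, hT, Finset.mul_sum, Finset.sum_mul, Finset.sum_comm (α := ι)]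
  refine Finset.sum_congr rfl fun _ _ => Finset.sum_congr rfl fun _ _ => ?_
  rw [Finset.sum_comm]
  exact Finset.sum_congr rfl fun _ _ => Finset.sum_congr rfl fun _ _ => by ring

variable {r : ℕ} {lam : Fin r → ℝ} {xs : Fin r → E l} {ys : Fin r → E m} {zs : Fin r → E n}

lemma sum_abs_inner_mul_inner_mul_inner_le (hx : ∀ a, ‖xs a‖ = 1) (hy : ∀ a, ‖ys a‖ = 1)
    (hxy : Pairwise fun a b => ⟪xs a, xs b⟫ * ⟪ys a, ys b⟫ = 0) (hz : Orthonormal ℝ zs)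
    (x : E l) (y : E m) (z : E n) :
    ∑ a, |⟪x, xs a⟫ * ⟪y, ys a⟫ * ⟪z, zs a⟫| ≤ ‖x‖ * ‖y‖ * ‖z‖ := by
  simpa only [abs_mul, inner_vecTensor, norm_vecTensor, mul_assoc] using
    sum_abs_inner_mul_abs_inner_le (orthonormal_vecTensor hx hy hxy) hz (vecTensor x y) z

lemma trilinear_apply_self (hT : ∀ i j k, T i j k = ∑ a, lam a * xs a i * ys a j * zs a k)
    (hx : ∀ a, ‖xs a‖ = 1) (hy : ∀ a, ‖ys a‖ = 1)
    (hxy : Pairwise fun a b => ⟪xs a, xs b⟫ * ⟪ys a, ys b⟫ = 0) (hz : ∀ a, ‖zs a‖ = 1)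
    (b : Fin r) : trilinear T (xs b) (ys b) (zs b) = lam b := by
  rw [trilinear_eq_sum hT, Finset.sum_eq_single b]
  · simp only [real_inner_self_eq_norm_sq, hx, hy, hz]
    ring
  · intro a _ hab
    rw [hxy hab.symm, zero_mul, mul_zero]
  · simp

lemma isGreatest_specSet (hT : ∀ i j k, T i j k = ∑ a, lam a * xs a i * ys a j * zs a k)
    (hx : ∀ a, ‖xs a‖ = 1) (hy : ∀ a, ‖ys a‖ = 1)
    (hxy : Pairwise fun a b => ⟪xs a, xs b⟫ * ⟪ys a, ys b⟫ = 0) (hz : Orthonormal ℝ zs)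
    (hlam : ∀ a, 0 ≤ lam a) {a₀ : Fin r} (hmax : ∀ a, lam a ≤ lam a₀) :
    IsGreatest (specSet T) (lam a₀) := by
  refine ⟨⟨xs a₀, ys a₀, zs a₀, hx a₀, hy a₀, hz.1 a₀,
    (trilinear_apply_self hT hx hy hxy hz.1 a₀).symm⟩, ?_⟩
  rintro _ ⟨x, y, z, hxu, hyu, hzu, rfl⟩
  have hbound := sum_abs_inner_mul_inner_mul_inner_le hx hy hxy hz x y z
  rw [hxu, hyu, hzu, one_mul, one_mul] at hbound
  change trilinear T x y z ≤ lam a₀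
  calc trilinear T x y z = ∑ a, lam a * (⟪x, xs a⟫ * ⟪y, ys a⟫ * ⟪z, zs a⟫) :=
        trilinear_eq_sum hT x y z
    _ ≤ ∑ a, lam a₀ * |⟪x, xs a⟫ * ⟪y, ys a⟫ * ⟪z, zs a⟫| :=
        Finset.sum_le_sum fun a _ =>
          (mul_le_mul_of_nonneg_left (le_abs_self _) (hlam a)).trans
            (mul_le_mul_of_nonneg_right (hmax a) (abs_nonneg _))
    _ ≤ lam a₀ := by
        rw [← Finset.mul_sum]
        exact mul_le_of_le_one_right (hlam a₀) hbound

lemma isLeast_nucSet (hT : ∀ i j k, T i j k = ∑ a, lam a * xs a i * ys a j * zs a k)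
    (hx : ∀ a, ‖xs a‖ = 1) (hy : ∀ a, ‖ys a‖ = 1)
    (hxy : Pairwise fun a b => ⟪xs a, xs b⟫ * ⟪ys a, ys b⟫ = 0) (hz : Orthonormal ℝ zs)
    (hlam : ∀ a, 0 ≤ lam a) :
    IsLeast (nucSet T) (∑ a, lam a) := by
  refine ⟨⟨r, lam, xs, ys, zs, fun a => ⟨hx a, hy a, hz.1 a⟩, hT,
    by simp only [abs_of_nonneg (hlam _)]⟩, ?_⟩
  rintro _ ⟨r', c, X, Y, Z, hXYZ, hT', rfl⟩
  calc ∑ a, lam a = ∑ a, trilinear T (xs a) (ys a) (zs a) :=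
        Finset.sum_congr rfl fun a _ => (trilinear_apply_self hT hx hy hxy hz.1 a).symm
    _ = ∑ b, c b * ∑ a, ⟪X b, xs a⟫ * ⟪Y b, ys a⟫ * ⟪Z b, zs a⟫ := by
        simp only [trilinear_eq_sum hT', Finset.mul_sum, real_inner_comm]
        exact Finset.sum_comm
    _ ≤ ∑ b, |c b| := Finset.sum_le_sum fun b _ => by
        have hS : |∑ a, ⟪X b, xs a⟫ * ⟪Y b, ys a⟫ * ⟪Z b, zs a⟫| ≤ 1 := by
          have := sum_abs_inner_mul_inner_mul_inner_le hx hy hxy hz (X b) (Y b) (Z b)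
          rw [(hXYZ b).1, (hXYZ b).2.1, (hXYZ b).2.2, one_mul, one_mul] at this
          exact (Finset.abs_sum_le_sum_abs _ _).trans this
        calc _ ≤ |c b| * |∑ a, ⟪X b, xs a⟫ * ⟪Y b, ys a⟫ * ⟪Z b, zs a⟫| :=
              (le_abs_self _).trans_eq (abs_mul _ _)
          _ ≤ |c b| := mul_le_of_le_one_right (abs_nonneg _) hS

end Decomposition

/-- for the special orthogonal decomposition,
‖T‖_σ = maxᵢ λᵢ and ‖T‖_* = Σᵢ λᵢ. -/
theorem stmt15 {l m n r : ℕ} (hr : 0 < r)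
    (lam : Fin r → ℝ) (hlam : ∀ a, 0 < lam a)
    (xs : Fin r → E l) (ys : Fin r → E m) (zs : Fin r → E n)
    (hunit : ∀ a, ‖xs a‖ = 1 ∧ ‖ys a‖ = 1 ∧ ‖zs a‖ = 1)
    (horth : ∀ a b, a ≠ b →
      (∑ i, xs a i * xs b i) * (∑ j, ys a j * ys b j) = 0 ∧
      (∑ k, zs a k * zs b k) = 0)
    (T : Fin l → Matrix (Fin m) (Fin n) ℝ)
    (hT : ∀ i j k, T i j k = ∑ a, lam a * xs a i * ys a j * zs a k)
    (σ N : ℝ)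
    (hσ : IsGreatest (specSet T) σ)
    (hN : IsLeast (nucSet T) N) :
    IsGreatest (Set.range lam) σ ∧ N = ∑ a, lam a := by
  simp only [EuclideanSpace.sum_mul_eq_inner] at horth
  have hx a := (hunit a).1
  have hy a := (hunit a).2.1
  have hxy : Pairwise fun a b => ⟪xs a, xs b⟫ * ⟪ys a, ys b⟫ = 0 :=
    fun a b hab => (horth a b hab).1
  have hz : Orthonormal ℝ zs := ⟨fun a => (hunit a).2.2, fun a b hab => (horth a b hab).2⟩
  have hlam' a := (hlam a).le
  obtain ⟨a₀, -, hmax⟩ := Finset.exists_max_image Finset.univ lam ⟨⟨0, hr⟩, Finset.mem_univ _⟩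
  have hσ_eq : σ = lam a₀ :=
    hσ.unique (isGreatest_specSet hT hx hy hxy hz hlam' fun a => hmax a (Finset.mem_univ a))
  refine ⟨⟨⟨a₀, hσ_eq.symm⟩, ?_⟩, hN.unique (isLeast_nucSet hT hx hy hxy hz hlam')⟩
  rintro _ ⟨a, rfl⟩
  exact hσ_eq ▸ hmax a (Finset.mem_univ a)
end
end
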